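/- arXiv:1105.0361 — 2 statements merged into one kernel-verified Lean document; each statement's English description precedes it below -/
import Mathlib

section
/- Fix r ≥ 1 and a real s > r/2. Let (ε_t)_{t} be an independent family of Rademacher random variables indexed by r-tuples of positive integers, and define for each n ≥ 1 the random variable X_n(ω) = n^{−s} ∑_{m_1+⋯+m_r = n} ε_{(m_1,...,m_r)}(ω) Λ(m_1)⋯Λ(m_r). Then ∑_{n=1}^∞ Var(X_n) < ∞. -/
/-!
Independence makes the variance additive, so
`Var X_n = n^{-2s} ∑_m Var(ε_m) Λ(m_1)²⋯Λ(m_r)²` with `Var ε_m ≤ 1`. Every `Λ(m_i)` is at most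
`log n`, and a composition of `n` into `r` positive parts is determined by its last `r - 1` parts,
so there are at most `n^{r-1}` of them. Hence `Var X_n ≤ n^{-(2s-r+1)} (log n)^{2r}`, which is
summable because `2s - r + 1 > 1` and `log n` grows more slowly than any power of `n`.
-/

open MeasureTheory ProbabilityTheory Filter Asymptotics Finset
open scoped ArithmeticFunction.vonMangoldt

lemma summable_natCast_rpow_neg_mul_log_pow {p : ℝ} (hp : 1 < p) (j : ℕ) :
    Summable fun n : ℕ => (n : ℝ) ^ (-p) * Real.log n ^ j := by
  obtain ⟨q, hq, hqp⟩ := exists_between hp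
  have hlog : (fun x : ℝ => Real.log x ^ j) =o[atTop] fun x => x ^ (p - q) := by
    simpa using isLittleO_log_rpow_rpow_atTop (j : ℝ) (sub_pos.2 hqp)
  have hbigO : (fun x : ℝ => x ^ (-p) * Real.log x ^ j) =O[atTop] fun x => x ^ (-q) := by
    refine ((isBigO_refl _ _).mul hlog.isBigO).trans_eventuallyEq ?_
    filter_upwards [eventually_gt_atTop 0] with x hx
    rw [← Real.rpow_add hx]
    ring_nf
  exact summable_of_isBigO_nat (Real.summable_nat_rpow.2 (by linarith))
    (hbigO.comp_tendsto tendsto_natCast_atTop_atTop)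

lemma summable_natCast_rpow_neg_sq_mul_pow_mul_log_pow {s : ℝ} {k : ℕ} (hs : (k + 1 : ℝ) < 2 * s)
    (j : ℕ) : Summable fun n : ℕ => ((n : ℝ) ^ (-s)) ^ 2 * ((n : ℝ) ^ k * Real.log n ^ j) := by
  refine (summable_natCast_rpow_neg_mul_log_pow (by linarith : 1 < 2 * s - k) j).congr fun n => ?_
  have hn : (0 : ℝ) ≤ n := n.cast_nonneg
  rw [← mul_assoc, ← Real.rpow_natCast (_ ^ (-s)), ← Real.rpow_mul hn, ← Real.rpow_natCast _ k,
    ← Real.rpow_add' hn (by push_cast; linarith)]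
  ring_nf

lemma card_filter_pos_antidiagonalTuple_le (k n : ℕ) :
    #{m ∈ Nat.antidiagonalTuple (k + 1) n | ∀ i, 0 < m i} ≤ n ^ k := by
  calc #{m ∈ Nat.antidiagonalTuple (k + 1) n | ∀ i, 0 < m i}
      ≤ #(Fintype.piFinset fun _ : Fin k => Icc 1 n) := by
        refine card_le_card_of_injOn Fin.tail (fun m hm => ?_) fun m hm m' hm' h => ?_
        · rw [mem_coe, mem_filter, Nat.mem_antidiagonalTuple] at hm
          rw [mem_coe, Fintype.mem_piFinset]
          intro j
          rw [mem_Icc]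
          exact ⟨hm.2 j.succ, hm.1 ▸ single_le_sum (fun i _ => Nat.zero_le (m i)) (mem_univ _)⟩
        · rw [mem_coe, mem_filter, Nat.mem_antidiagonalTuple, Fin.sum_univ_succ] at hm hm'
          have h0 : m 0 = m' 0 := by
            have : ∑ j : Fin k, m j.succ = ∑ j : Fin k, m' j.succ := congrArg (∑ j, · j) h
            omega
          rw [← Fin.cons_self_tail m, ← Fin.cons_self_tail m', h0, h]
    _ = n ^ k := by simp

lemma vonMangoldt_le_log_of_le {a n : ℕ} (h : a ≤ n) : Λ a ≤ Real.log n := by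
  rcases a.eq_zero_or_pos with rfl | ha
  · simpa using Real.log_natCast_nonneg n
  · exact ArithmeticFunction.vonMangoldt_le_log.trans
      (Real.log_le_log (by exact_mod_cast ha) (by exact_mod_cast h))

lemma prod_vonMangoldt_le_log_sum_pow {ι : Type*} [Fintype ι] (m : ι → ℕ) :
    ∏ i, Λ (m i) ≤ Real.log (∑ i, m i : ℕ) ^ Fintype.card ι := by
  calc ∏ i, Λ (m i) ≤ ∏ _i : ι, Real.log (∑ i, m i : ℕ) :=
        prod_le_prod (fun i _ => ArithmeticFunction.vonMangoldt_nonneg)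
          fun i _ => vonMangoldt_le_log_of_le
            (single_le_sum (fun j _ => Nat.zero_le (m j)) (mem_univ i))
    _ = _ := by rw [prod_const, card_univ]

section Rademacher

variable {Ω : Type*} [MeasurableSpace Ω] {μ : Measure Ω} [IsProbabilityMeasure μ]

lemma ae_eq_one_or_eq_neg_one_of_measure_eq_half {X : Ω → ℝ} (hX : Measurable X)
    (h1 : μ {ω | X ω = 1} = 1 / 2) (h2 : μ {ω | X ω = -1} = 1 / 2) :
    ∀ᵐ ω ∂μ, X ω = 1 ∨ X ω = -1 := by
  have hdisj : Disjoint {ω | X ω = 1} {ω | X ω = -1} :=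
    Set.disjoint_left.2 fun ω (h : X ω = 1) (h' : X ω = -1) => by linarith
  have hunion : μ ({ω | X ω = 1} ∪ {ω | X ω = -1}) = 1 := by
    rw [measure_union hdisj (hX (measurableSet_singleton _)), h1, h2, ENNReal.add_halves]
  exact (ae_iff_measure_eq (by measurability)).2 (hunion.trans measure_univ.symm)

lemma variance_le_one_of_ae_eq_one_or_eq_neg_one {X : Ω → ℝ} (hX : AEMeasurable X μ)
    (h : ∀ᵐ ω ∂μ, X ω = 1 ∨ X ω = -1) : variance X μ ≤ 1 := by
  have hIcc : ∀ᵐ ω ∂μ, X ω ∈ Set.Icc (-1 : ℝ) 1 := h.mono fun ω hω => by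
    rcases hω with hω | hω <;> simp [hω]
  simpa using variance_le_sq_of_bounded hIcc hX

lemma memLp_two_of_ae_eq_one_or_eq_neg_one {X : Ω → ℝ} (hX : AEStronglyMeasurable X μ)
    (h : ∀ᵐ ω ∂μ, X ω = 1 ∨ X ω = -1) : MemLp X 2 μ := by
  refine memLp_of_bounded (a := -1) (b := 1) (h.mono fun ω hω => ?_) hX 2
  rcases hω with hω | hω <;> simp [hω]

end Rademacher

section WeightedSums

variable {Ω : Type*} [MeasurableSpace Ω] {μ : Measure Ω}

lemma ProbabilityTheory.iIndepFun.variance_sum_mul {ι : Type*} {X : ι → Ω → ℝ}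
    (hind : iIndepFun X μ) (hX : ∀ i, MemLp (X i) 2 μ) (c : ι → ℝ) (S : Finset ι) :
    variance (fun ω => ∑ i ∈ S, X i ω * c i) μ = ∑ i ∈ S, variance (X i) μ * c i ^ 2 := by
  have hXc : ∀ i ∈ S, MemLp (fun ω => X i ω * c i) 2 μ := fun i _ => (hX i).mul_const (c i)
  have hpair : Set.Pairwise S fun i j =>
      IndepFun (fun ω => X i ω * c i) (fun ω => X j ω * c j) μ :=
    fun i _ j _ hij => (hind.indepFun hij).comp (measurable_mul_const _) (measurable_mul_const _)
  have hsum : (fun ω => ∑ i ∈ S, X i ω * c i) = ∑ i ∈ S, fun ω => X i ω * c i := by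
    ext ω; simp only [Finset.sum_apply]
  simp only [hsum, IndepFun.variance_sum hXc hpair, variance_mul_const]

lemma variance_weighted_goldbach_sum_le {k : ℕ} {ε : (Fin (k + 1) → ℕ) → Ω → ℝ}
    (hind : iIndepFun ε μ) (hmem : ∀ t, MemLp (ε t) 2 μ) (hvar : ∀ t, variance (ε t) μ ≤ 1)
    (s : ℝ) (n : ℕ) :
    variance (fun ω => (n : ℝ) ^ (-s) *
        ∑ m ∈ {m ∈ Nat.antidiagonalTuple (k + 1) n | ∀ i, 0 < m i}, ε m ω * ∏ i, Λ (m i)) μ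
      ≤ ((n : ℝ) ^ (-s)) ^ 2 * ((n : ℝ) ^ k * Real.log n ^ (2 * (k + 1))) := by
  rw [variance_const_mul, hind.variance_sum_mul hmem]
  gcongr
  have hterm : ∀ m ∈ {m ∈ Nat.antidiagonalTuple (k + 1) n | ∀ i, 0 < m i},
      variance (ε m) μ * (∏ i, Λ (m i)) ^ 2 ≤ Real.log n ^ (2 * (k + 1)) := by
    intro m hm
    have hsum : ∑ i, m i = n := Nat.mem_antidiagonalTuple.1 (mem_filter.1 hm).1
    have hprod : ∏ i, Λ (m i) ≤ Real.log n ^ (k + 1) := by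
      simpa [hsum] using prod_vonMangoldt_le_log_sum_pow m
    calc variance (ε m) μ * (∏ i, Λ (m i)) ^ 2 ≤ 1 * (Real.log n ^ (k + 1)) ^ 2 := by
          gcongr
          exact hvar m
      _ = Real.log n ^ (2 * (k + 1)) := by ring
  calc _ ≤ #{m ∈ Nat.antidiagonalTuple (k + 1) n | ∀ i, 0 < m i} • Real.log n ^ (2 * (k + 1)) :=
        sum_le_card_nsmul _ _ _ hterm
    _ ≤ (n : ℝ) ^ k * Real.log n ^ (2 * (k + 1)) := by
        rw [nsmul_eq_mul]
        gcongr
        exact_mod_cast card_filter_pos_antidiagonalTuple_le k n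

end WeightedSums

/-- For s > r/2, the variances of X_n(ω) = n^{-s} ∑_{m_1+⋯+m_r=n} ε_m(ω) Λ(m_1)⋯Λ(m_r)
are summable. -/
theorem random_goldbach_variance_summable {Ω : Type*} [MeasurableSpace Ω]
    (μ : Measure Ω) [IsProbabilityMeasure μ]
    (r : ℕ) (hr : 1 ≤ r) (s : ℝ) (hs : (r : ℝ) / 2 < s)
    (ε : (Fin r → ℕ) → Ω → ℝ)
    (hmeas : ∀ t, Measurable (ε t))
    (h1 : ∀ t, μ {ω | ε t ω = 1} = 1/2)
    (h2 : ∀ t, μ {ω | ε t ω = -1} = 1/2)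
    (hind : iIndepFun ε μ) :
    Summable (fun n : ℕ => variance (fun ω =>
      (n : ℝ) ^ (-s) *
        ∑ m ∈ (Finset.Nat.antidiagonalTuple r n).filter (fun m => ∀ i, 0 < m i),
          ε m ω * ∏ i, ArithmeticFunction.vonMangoldt (m i)) μ) := by
  obtain ⟨k, rfl⟩ : ∃ k, r = k + 1 := ⟨r - 1, by omega⟩
  have hrad : ∀ t, ∀ᵐ ω ∂μ, ε t ω = 1 ∨ ε t ω = -1 := fun t =>
    ae_eq_one_or_eq_neg_one_of_measure_eq_half (hmeas t) (h1 t) (h2 t)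
  have hvar := variance_weighted_goldbach_sum_le hind
    (fun t => memLp_two_of_ae_eq_one_or_eq_neg_one (hmeas t).aestronglyMeasurable (hrad t))
    (fun t => variance_le_one_of_ae_eq_one_or_eq_neg_one (hmeas t).aemeasurable (hrad t)) s
  push_cast at hs
  exact Summable.of_nonneg_of_le (fun n => variance_nonneg _ _) hvar
    (summable_natCast_rpow_neg_sq_mul_pow_mul_log_pow (by linarith) _)
end

section
/- Fix r ≥ 1 and a real s > r/2. With notation as above, the random series ∑_{n=1}^∞ X_n(ω), where X_n(ω) = n^{−s} ∑_{m_1+⋯+m_r=n} ε_{(m_1,...,m_r)}(ω) Λ(m_1)⋯Λ(m_r), converges almost surely. -/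
/-!
The summands `X_n` are independent across `n`, because they involve disjoint blocks of the
independent signs `ε_m` (those with `m_1 + ⋯ + m_r = n`); they are centred, and
`Var X_n = n^{-2s} ∑ Λ(m_1)²⋯Λ(m_r)² ≤ n^{r-1-2s} (log n)^{2r}`, since there are at most
`n^{r-1}` such `m` with positive entries and `Λ(m_i) ≤ log n`. For `s > r/2` these variances are
summable, so the partial sums form an `L²`-bounded martingale, which converges almost surely
(Kolmogorov's one-series theorem).
-/

open MeasureTheory ProbabilityTheory Filter Finset Topology Function Asymptotics
open scoped ArithmeticFunction.vonMangoldt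

namespace ProbabilityTheory

variable {Ω ι : Type*} {mΩ : MeasurableSpace Ω} {μ : Measure Ω}

structure IsRademacher (X : Ω → ℝ) (μ : Measure Ω) : Prop where
  measurable : Measurable X
  measure_eq_one : μ {ω | X ω = 1} = 1 / 2
  measure_eq_neg_one : μ {ω | X ω = -1} = 1 / 2

namespace IsRademacher

variable [IsProbabilityMeasure μ] {X : Ω → ℝ} (hX : IsRademacher X μ)
include hX

lemma ae_eq_one_or_eq_neg_one : ∀ᵐ ω ∂μ, X ω = 1 ∨ X ω = -1 := by
  have hone : MeasurableSet {ω | X ω = 1} := hX.measurable (measurableSet_singleton 1)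
  have hneg : MeasurableSet {ω | X ω = -1} := hX.measurable (measurableSet_singleton (-1))
  have hdisj : Disjoint {ω | X ω = 1} {ω | X ω = -1} :=
    Set.disjoint_left.mpr fun ω (h1 : X ω = 1) (h2 : X ω = -1) => by linarith
  have hfull : μ ({ω | X ω = 1} ∪ {ω | X ω = -1}) = 1 := by
    rw [measure_union hdisj hneg, hX.measure_eq_one, hX.measure_eq_neg_one, ENNReal.add_halves]
  exact mem_ae_iff.mpr ((prob_compl_eq_zero_iff (hone.union hneg)).mpr hfull)

lemma ae_eq_two_mul_indicator_sub_one :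
    X =ᵐ[μ] fun ω => 2 * {ω | X ω = 1}.indicator (fun _ => (1 : ℝ)) ω - 1 := by
  filter_upwards [hX.ae_eq_one_or_eq_neg_one] with ω h
  rcases h with h | h <;> simp [Set.indicator_apply, h] <;> norm_num

lemma integral_eq_zero : μ[X] = 0 := by
  have hone : MeasurableSet {ω | X ω = 1} := hX.measurable (measurableSet_singleton 1)
  rw [integral_congr_ae hX.ae_eq_two_mul_indicator_sub_one,
    integral_sub ((integrable_const (1 : ℝ)).indicator hone |>.const_mul 2) (integrable_const 1),
    integral_const_mul, integral_indicator_const _ hone, measureReal_def, hX.measure_eq_one]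
  norm_num

lemma memLp_two : MemLp X 2 μ :=
  MemLp.of_bound hX.measurable.aestronglyMeasurable 1 <| by
    filter_upwards [hX.ae_eq_one_or_eq_neg_one] with ω h
    rcases h with h | h <;> simp [h]

lemma variance_le_one : Var[X; μ] ≤ 1 := by
  have hbdd : ∀ᵐ ω ∂μ, X ω ∈ Set.Icc (-1) 1 := by
    filter_upwards [hX.ae_eq_one_or_eq_neg_one] with ω h
    rcases h with h | h <;> simp [h]
  simpa using variance_le_sq_of_bounded hbdd hX.measurable.aemeasurable

lemma variance_const_mul_le (c : ℝ) : Var[fun ω => c * X ω; μ] ≤ c ^ 2 := by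
  rw [variance_const_mul]
  simpa using mul_le_mul_of_nonneg_left hX.variance_le_one (sq_nonneg c)

end IsRademacher

lemma eLpNorm_one_le_sqrt_variance [IsProbabilityMeasure μ] {X : Ω → ℝ} (hX : MemLp X 2 μ)
    (hmean : μ[X] = 0) : eLpNorm X 1 μ ≤ ENNReal.ofReal √Var[X; μ] := by
  have hsq : eLpNorm X 2 μ = evariance X μ ^ (1 / 2 : ℝ) := by
    rw [eLpNorm_eq_lintegral_rpow_enorm_toReal two_ne_zero ENNReal.ofNat_ne_top, evariance]
    simp_rw [hmean, sub_zero, ENNReal.toReal_ofNat, ← ENNReal.rpow_two]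
  calc eLpNorm X 1 μ ≤ eLpNorm X 2 μ :=
        eLpNorm_le_eLpNorm_of_exponent_le one_le_two hX.aestronglyMeasurable
    _ = ENNReal.ofReal √Var[X; μ] := by
        rw [hsq, ← ofReal_variance hX, Real.sqrt_eq_rpow,
          ENNReal.ofReal_rpow_of_nonneg (variance_nonneg X μ) one_half_pos.le]

section Blocks

variable (X : ι → Ω → ℝ) (hX : ∀ t, Measurable (X t)) (B : ℕ → Finset ι)

def blockFiltration : Filtration ℕ mΩ where
  seq N := ⨆ t ∈ ⋃ n < N, (B n : Set ι), MeasurableSpace.comap (X t) inferInstance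
  mono' _ _ hNM := biSup_mono <| Set.biUnion_subset_biUnion_left fun _ hn => lt_of_lt_of_le hn hNM
  le' _ := iSup₂_le fun t _ => (hX t).comap_le

variable {X B}

lemma measurable_blockFiltration {t : ι} {n N : ℕ} (hn : n < N) (ht : t ∈ B n) :
    Measurable[blockFiltration X hX B N] (X t) :=
  measurable_iff_comap_le.mpr <| le_biSup (fun t => MeasurableSpace.comap (X t) inferInstance) <|
    Set.mem_biUnion hn ht

lemma indep_iSup_block_blockFiltration (hind : iIndepFun X μ) (hB : Pairwise (Disjoint on B))
    (N : ℕ) :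
    Indep (⨆ t ∈ (B N : Set ι), MeasurableSpace.comap (X t) inferInstance)
      (blockFiltration X hX B N) μ :=
  indep_iSup_of_disjoint (fun t => (hX t).comap_le) hind <| by
    simp only [Set.disjoint_iUnion_right]
    exact fun n hn => Finset.disjoint_coe.mpr (hB hn.ne')

lemma variance_sum_blocks (hind : iIndepFun X μ) (hB : Pairwise (Disjoint on B))
    (hL2 : ∀ t, MemLp (X t) 2 μ) (N : ℕ) :
    Var[fun ω => ∑ n ∈ range N, ∑ t ∈ B n, X t ω; μ] = ∑ n ∈ range N, ∑ t ∈ B n, Var[X t; μ] := by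
  classical
  have hdisj : Set.PairwiseDisjoint ↑(range N) B := hB.set_pairwise _
  have hsum : (fun ω => ∑ n ∈ range N, ∑ t ∈ B n, X t ω) = ∑ t ∈ (range N).biUnion B, X t := by
    funext ω
    rw [Finset.sum_apply, sum_biUnion hdisj]
  rw [hsum, ← sum_biUnion hdisj]
  exact IndepFun.variance_sum (fun t _ => hL2 t) fun t _ u _ htu => hind.indepFun htu

variable [IsProbabilityMeasure μ]

lemma martingale_sum_blocks (hind : iIndepFun X μ) (hB : Pairwise (Disjoint on B))
    (hint : ∀ t, Integrable (X t) μ) (hmean : ∀ t, μ[X t] = 0) :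
    Martingale (fun N ω => ∑ n ∈ range N, ∑ t ∈ B n, X t ω) (blockFiltration X hX B) μ := by
  have hadapted : StronglyAdapted (blockFiltration X hX B)
      (fun N ω => ∑ n ∈ range N, ∑ t ∈ B n, X t ω) := fun N =>
    (Finset.measurable_sum _ fun n hn => Finset.measurable_sum _ fun t ht =>
      measurable_blockFiltration hX (mem_range.mp hn) ht).stronglyMeasurable
  refine martingale_of_condExp_sub_eq_zero_nat hadapted
    (fun N => integrable_finsetSum _ fun n _ => integrable_finsetSum _ fun t _ => hint t)
    fun N => ?_
  have hincrement : (fun ω => ∑ n ∈ range (N + 1), ∑ t ∈ B n, X t ω) -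
      (fun ω => ∑ n ∈ range N, ∑ t ∈ B n, X t ω) = fun ω => ∑ t ∈ B N, X t ω := by
    funext ω
    simp [sum_range_succ]
  have hmeasurable : StronglyMeasurable[⨆ t ∈ (B N : Set ι),
      MeasurableSpace.comap (X t) inferInstance] fun ω => ∑ t ∈ B N, X t ω :=
    (Finset.measurable_sum _ fun t ht => measurable_iff_comap_le.mpr <|
      le_biSup (fun t => MeasurableSpace.comap (X t) inferInstance) ht).stronglyMeasurable
  rw [hincrement]
  refine (condExp_indep_eq (iSup₂_le fun t _ => (hX t).comap_le) ((blockFiltration X hX B).le N)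
    hmeasurable (indep_iSup_block_blockFiltration hX hind hB N)).trans ?_
  rw [integral_finsetSum _ fun t _ => hint t, sum_eq_zero fun t _ => hmean t]
  rfl

include hX in
/-- Kolmogorov's one-series theorem, with the terms grouped into finite blocks. -/
theorem ae_exists_tendsto_sum_blocks_of_summable_variance (hind : iIndepFun X μ)
    (hB : Pairwise (Disjoint on B)) (hL2 : ∀ t, MemLp (X t) 2 μ) (hmean : ∀ t, μ[X t] = 0)
    (hvar : Summable fun n => ∑ t ∈ B n, Var[X t; μ]) :
    ∀ᵐ ω ∂μ, ∃ L, Tendsto (fun N => ∑ n ∈ range N, ∑ t ∈ B n, X t ω) atTop (𝓝 L) := by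
  have hint : ∀ t, Integrable (X t) μ := fun t => (hL2 t).integrable one_le_two
  have hbdd : ∀ N, eLpNorm (fun ω => ∑ n ∈ range N, ∑ t ∈ B n, X t ω) 1 μ
      ≤ (√(∑' n, ∑ t ∈ B n, Var[X t; μ])).toNNReal := by
    intro N
    have hL2sum : MemLp (fun ω => ∑ n ∈ range N, ∑ t ∈ B n, X t ω) 2 μ :=
      memLp_finsetSum _ fun n _ => memLp_finsetSum _ fun t _ => hL2 t
    have hmeansum : μ[fun ω => ∑ n ∈ range N, ∑ t ∈ B n, X t ω] = 0 := by
      rw [integral_finsetSum _ fun n _ => integrable_finsetSum _ fun t _ => hint t]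
      exact sum_eq_zero fun n _ => by
        rw [integral_finsetSum _ fun t _ => hint t, sum_eq_zero fun t _ => hmean t]
    refine (eLpNorm_one_le_sqrt_variance hL2sum hmeansum).trans <| ENNReal.ofReal_le_ofReal <|
      Real.sqrt_le_sqrt ?_
    rw [variance_sum_blocks hind hB hL2 N]
    exact hvar.sum_le_tsum _ fun n _ => sum_nonneg fun t _ => variance_nonneg _ _
  exact (martingale_sum_blocks hX hind hB hint hmean).submartingale.exists_ae_tendsto_of_bdd hbdd

theorem ae_exists_tendsto_sum_blocks_rademacher {ε : ι → Ω → ℝ}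
    (hε : ∀ t, IsRademacher (ε t) μ) (hind : iIndepFun ε μ) (hB : Pairwise (Disjoint on B))
    (a : ι → ℝ) (ha : Summable fun n => ∑ t ∈ B n, a t ^ 2) :
    ∀ᵐ ω ∂μ, ∃ L, Tendsto (fun N => ∑ n ∈ range N, ∑ t ∈ B n, a t * ε t ω) atTop (𝓝 L) :=
  ae_exists_tendsto_sum_blocks_of_summable_variance (X := fun t ω => a t * ε t ω)
    (fun t => (hε t).measurable.const_mul _)
    (hind.comp (fun t x => a t * x) fun t => measurable_const_mul _) hB
    (fun t => (hε t).memLp_two.const_mul _)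
    (fun t => by rw [integral_const_mul, (hε t).integral_eq_zero, mul_zero])
    (ha.of_nonneg_of_le (fun n => sum_nonneg fun t _ => variance_nonneg _ _)
      fun n => sum_le_sum fun t _ => (hε t).variance_const_mul_le (a t))

end Blocks

end ProbabilityTheory

lemma Real.summable_rpow_mul_log_pow {p : ℝ} (hp : p < -1) (q : ℕ) :
    Summable fun n : ℕ => (n : ℝ) ^ p * Real.log n ^ q := by
  obtain ⟨δ, hδ, hpδ⟩ : ∃ δ : ℝ, 0 < δ ∧ p + δ < -1 := ⟨(-1 - p) / 2, by linarith, by linarith⟩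
  have hlog : (fun n : ℕ => Real.log n ^ q) =O[atTop] fun n : ℕ => (n : ℝ) ^ δ := by
    simpa only [Real.rpow_natCast, comp_def] using
      ((isLittleO_log_rpow_rpow_atTop q hδ).comp_tendsto tendsto_natCast_atTop_atTop).isBigO
  have hcollect : (fun n : ℕ => (n : ℝ) ^ p * (n : ℝ) ^ δ) =ᶠ[atTop]
      fun n : ℕ => (n : ℝ) ^ (p + δ) := by
    filter_upwards [eventually_gt_atTop 0] with n hn
    rw [Real.rpow_add (by exact_mod_cast hn)]
  exact summable_of_isBigO_nat (Real.summable_nat_rpow.mpr hpδ)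
    (((isBigO_refl _ _).mul hlog).trans hcollect.isBigO)

namespace Finset.Nat

lemma pairwise_disjoint_antidiagonalTuple (k : ℕ) : Pairwise (Disjoint on antidiagonalTuple k) :=
  fun _ _ hne => disjoint_left.mpr fun _ hm hm' =>
    hne ((mem_antidiagonalTuple.mp hm).symm.trans (mem_antidiagonalTuple.mp hm'))

lemma card_filter_pos_antidiagonalTuple_le (k n : ℕ) :
    #{m ∈ antidiagonalTuple (k + 1) n | ∀ i, 0 < m i} ≤ n ^ k := by
  have hsum : ∀ m ∈ antidiagonalTuple (k + 1) n, m 0 + ∑ i, Fin.tail m i = n := fun m hm => by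
    simpa [Fin.sum_univ_succ, Fin.tail] using mem_antidiagonalTuple.mp hm
  calc #{m ∈ antidiagonalTuple (k + 1) n | ∀ i, 0 < m i}
      ≤ #(Fintype.piFinset fun _ : Fin k => Icc 1 n) := by
        refine card_le_card_of_injOn Fin.tail (fun m hm => ?_) (fun m hm m' hm' h => ?_)
        · obtain ⟨hmn, hpos⟩ := mem_filter.mp hm
          refine Fintype.mem_piFinset.mpr fun i => mem_Icc.mpr ⟨hpos _, ?_⟩
          have hmi := single_le_sum (fun j _ => Nat.zero_le (Fin.tail m j)) (mem_univ i)
          have := hsum m hmn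
          omega
        · have h0 : m 0 = m' 0 := by
            have hm0 := hsum m (mem_filter.mp hm).1
            have hm'0 := hsum m' (mem_filter.mp hm').1
            rw [h] at hm0
            omega
          rw [← Fin.cons_self_tail m, ← Fin.cons_self_tail m', h0, h]
    _ = n ^ k := by simp

end Finset.Nat

lemma ArithmeticFunction.prod_vonMangoldt_le_log_pow {r n : ℕ} {m : Fin r → ℕ}
    (hm : ∑ i, m i = n) : ∏ i, Λ (m i) ≤ Real.log n ^ r := by
  have hle : ∀ i, Λ (m i) ≤ Real.log n := by
    intro i
    rcases (m i).eq_zero_or_pos with h | h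
    · simpa [h] using Real.log_natCast_nonneg n
    · refine ArithmeticFunction.vonMangoldt_le_log.trans (Real.log_le_log (by exact_mod_cast h) ?_)
      exact_mod_cast hm ▸ single_le_sum (fun j _ => Nat.zero_le (m j)) (mem_univ i)
  calc ∏ i, Λ (m i) ≤ ∏ _i : Fin r, Real.log n :=
        prod_le_prod (fun i _ => ArithmeticFunction.vonMangoldt_nonneg) fun i _ => hle i
    _ = Real.log n ^ r := by simp

/-- The coefficient of `ε_m` in `X_n`, where `n = m_1 + ⋯ + m_r`. -/
noncomputable def goldbachWeight {r : ℕ} (s : ℝ) (m : Fin r → ℕ) : ℝ :=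
  ((∑ i, m i : ℕ) : ℝ) ^ (-s) * ∏ i, Λ (m i)

lemma goldbachWeight_nonneg {r : ℕ} (s : ℝ) (m : Fin r → ℕ) : 0 ≤ goldbachWeight s m :=
  mul_nonneg (Real.rpow_nonneg (Nat.cast_nonneg _) _)
    (prod_nonneg fun _ _ => ArithmeticFunction.vonMangoldt_nonneg)

lemma sum_goldbachWeight_sq_le (k n : ℕ) (s : ℝ) :
    ∑ m ∈ Nat.antidiagonalTuple (k + 1) n with ∀ i, 0 < m i, goldbachWeight s m ^ 2
      ≤ (n : ℝ) ^ k * ((n : ℝ) ^ (-s) * Real.log n ^ (k + 1)) ^ 2 := by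
  have hterm : ∀ m ∈ Nat.antidiagonalTuple (k + 1) n, goldbachWeight s m ^ 2
      ≤ ((n : ℝ) ^ (-s) * Real.log n ^ (k + 1)) ^ 2 := by
    intro m hm
    have hmn := Nat.mem_antidiagonalTuple.mp hm
    refine pow_le_pow_left₀ (goldbachWeight_nonneg s m) ?_ 2
    rw [goldbachWeight, hmn]
    exact mul_le_mul_of_nonneg_left (ArithmeticFunction.prod_vonMangoldt_le_log_pow hmn)
      (Real.rpow_nonneg (Nat.cast_nonneg _) _)
  calc ∑ m ∈ Nat.antidiagonalTuple (k + 1) n with ∀ i, 0 < m i, goldbachWeight s m ^ 2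
      ≤ #{m ∈ Nat.antidiagonalTuple (k + 1) n | ∀ i, 0 < m i} *
          ((n : ℝ) ^ (-s) * Real.log n ^ (k + 1)) ^ 2 := by
        rw [← nsmul_eq_mul, ← sum_const]
        exact sum_le_sum fun m hm => hterm m (mem_filter.mp hm).1
    _ ≤ (n : ℝ) ^ k * ((n : ℝ) ^ (-s) * Real.log n ^ (k + 1)) ^ 2 := by
        gcongr
        exact_mod_cast Nat.card_filter_pos_antidiagonalTuple_le k n

lemma summable_sum_goldbachWeight_sq {k : ℕ} {s : ℝ} (hs : (k : ℝ) + 1 < 2 * s) :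
    Summable fun n =>
      ∑ m ∈ Nat.antidiagonalTuple (k + 1) n with ∀ i, 0 < m i, goldbachWeight s m ^ 2 := by
  have hbound :
      Summable fun n : ℕ => (n : ℝ) ^ k * ((n : ℝ) ^ (-s) * Real.log n ^ (k + 1)) ^ 2 := by
    refine (Real.summable_rpow_mul_log_pow (p := k - 2 * s) (by linarith) (2 * (k + 1))).congr
      fun n => ?_
    rcases n.eq_zero_or_pos with rfl | hn
    · simp
    have hx : (0 : ℝ) < n := by exact_mod_cast hn
    rw [← Real.rpow_natCast (n : ℝ) k, mul_pow, ← Real.rpow_natCast ((n : ℝ) ^ (-s)) 2,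
      ← Real.rpow_mul hx.le, ← mul_assoc, ← Real.rpow_add hx, ← pow_mul]
    ring_nf
  exact hbound.of_nonneg_of_le (fun n => sum_nonneg fun m _ => sq_nonneg _)
    fun n => sum_goldbachWeight_sq_le k n s

/-- For s > r/2, the random series ∑_n X_n(ω), with
X_n(ω) = n^{-s} ∑_{m_1+⋯+m_r=n} ε_m(ω) Λ(m_1)⋯Λ(m_r), converges almost surely. -/
theorem random_goldbach_series_converges_ae {Ω : Type*} [MeasurableSpace Ω]
    (μ : Measure Ω) [IsProbabilityMeasure μ]
    (r : ℕ) (hr : 1 ≤ r) (s : ℝ) (hs : (r : ℝ) / 2 < s)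
    (ε : (Fin r → ℕ) → Ω → ℝ)
    (hmeas : ∀ t, Measurable (ε t))
    (h1 : ∀ t, μ {ω | ε t ω = 1} = 1/2)
    (h2 : ∀ t, μ {ω | ε t ω = -1} = 1/2)
    (hind : iIndepFun ε μ) :
    ∀ᵐ ω ∂μ, ∃ L : ℝ, Filter.Tendsto
      (fun N => ∑ n ∈ Finset.range N,
        (n : ℝ) ^ (-s) *
          ∑ m ∈ (Finset.Nat.antidiagonalTuple r n).filter (fun m => ∀ i, 0 < m i),
            ε m ω * ∏ i, ArithmeticFunction.vonMangoldt (m i))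
      Filter.atTop (nhds L) := by
  obtain ⟨k, rfl⟩ : ∃ k, r = k + 1 := ⟨r - 1, by omega⟩
  have hweights := summable_sum_goldbachWeight_sq (k := k) (s := s) (by push_cast at hs; linarith)
  filter_upwards [ae_exists_tendsto_sum_blocks_rademacher (fun t => ⟨hmeas t, h1 t, h2 t⟩) hind
    (fun _ _ hne => disjoint_filter_filter (Nat.pairwise_disjoint_antidiagonalTuple _ hne))
    _ hweights] with ω ⟨L, hL⟩
  refine ⟨L, hL.congr fun N => sum_congr rfl fun n _ => ?_⟩
  rw [mul_sum]
  refine sum_congr rfl fun m hm => ?_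
  rw [goldbachWeight, Nat.mem_antidiagonalTuple.mp (mem_filter.mp hm).1]
  ring
end
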